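/- Fix an integer n > 1. Every global minimizer (a1,a2,b1,b2,α) of Problem (Q) satisfies |b1| ≤ a1. -/

import Mathlib

/-- Objective of Problem (Q). -/
noncomputable def FQ (n : ℕ) (a1 a2 b1 b2 α : ℝ) : ℝ :=
  ((n : ℝ) - 1) * Real.sqrt (2 * (a1 ^ 2 + b1 ^ 2) + 2 * |a1 ^ 2 - b1 ^ 2|) +
    2 * Real.sqrt ((a1 + n * a2) ^ 2 + n * α ^ 2)

/-- Feasible set of Problem (Q). -/
def FeasQ (n : ℕ) (a1 a2 b1 b2 α : ℝ) : Prop :=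
  1 ≤ a1 ∧ b1 + b2 - α + 1 ≤ a1 + a2 + α ∧ a1 + b1 + n * (a2 + b2) = 0

/-!
The first term of `FQ` is `2 (n - 1) max |a1| |b1|`. If `|b1| > a1`, move `b1` to `-a1`, keeping
the equality constraint by changing `b2` and the inequality constraint by raising `α` by
`t = (|b1| - a1) (n - 1) / (2 n)`. This lowers the first term by `2 (n - 1) (|b1| - a1)`, while the
second term, twice a Euclidean norm, rises by at most `2 √n t ≤ (n - 1) (|b1| - a1)`.
-/

open Real Complex

theorem sqrt_two_mul_add_two_mul_abs_sub (x y : ℝ) :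
    √(2 * (x ^ 2 + y ^ 2) + 2 * |x ^ 2 - y ^ 2|) = 2 * max |x| |y| := by
  rw [sqrt_eq_iff_eq_sq (by positivity) (by positivity), mul_pow]
  rcases le_total |x| |y| with h | h
  · rw [max_eq_right h, abs_of_nonpos (by nlinarith [sq_abs x, sq_abs y, abs_nonneg x]), sq_abs]
    ring
  · rw [max_eq_left h, abs_of_nonneg (by nlinarith [sq_abs x, sq_abs y, abs_nonneg y]), sq_abs]
    ring

theorem sqrt_sq_add_mul_sq_add_le (x u v : ℝ) {c : ℝ} (hc : 0 ≤ c) :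
    √(x ^ 2 + c * (u + v) ^ 2) ≤ √(x ^ 2 + c * u ^ 2) + √c * |v| := by
  have hnorm (y : ℝ) : √(x ^ 2 + c * y ^ 2) = ‖x + ((√c * y : ℝ) : ℂ) * I‖ := by
    rw [norm_add_mul_I, mul_pow, sq_sqrt hc]
  have hv : ‖((√c * v : ℝ) : ℂ) * I‖ = √c * |v| := by
    simp [abs_of_nonneg (sqrt_nonneg c)]
  rw [hnorm, hnorm, ← hv, mul_add, ofReal_add, add_mul, ← add_assoc]
  exact norm_add_le _ _

theorem FeasQ.move_b1_to_neg_a1 {n : ℕ} (hn : 0 < n) {a1 a2 b1 b2 α : ℝ}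
    (h : FeasQ n a1 a2 b1 b2 α) :
    FeasQ n a1 a2 (-a1) (b2 + (b1 + a1) / n) (α + (|b1| - a1) * (n - 1) / (2 * n)) := by
  obtain ⟨ha1, hle, heq⟩ := h
  have hn' : (1 : ℝ) ≤ n := by exact_mod_cast hn
  refine ⟨ha1, ?_, ?_⟩
  · field_simp
    nlinarith [neg_abs_le b1]
  · field_simp
    linarith

theorem FQ_move_b1_to_neg_a1_lt {n : ℕ} (hn : 1 < n) {a1 b1 : ℝ} (ha1 : 0 ≤ a1) (hb1 : a1 < |b1|)
    (a2 b2 b2' α : ℝ) :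
    FQ n a1 a2 (-a1) b2' (α + (|b1| - a1) * (n - 1) / (2 * n)) < FQ n a1 a2 b1 b2 α := by
  have hn' : (1 : ℝ) < n := by exact_mod_cast hn
  set t := (|b1| - a1) * (n - 1) / (2 * n) with ht
  have ht0 : 0 ≤ t := div_nonneg (mul_nonneg (by linarith) (by linarith)) (by positivity)
  have hrise : √n * |t| < (n - 1) * (|b1| - a1) :=
    calc √n * |t| ≤ n * t := by
          rw [abs_of_nonneg ht0]
          exact mul_le_mul_of_nonneg_right (sqrt_le_self_iff.mpr (Or.inr hn'.le)) ht0
      _ = (n - 1) * (|b1| - a1) / 2 := by rw [ht]; field_simp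
      _ < (n - 1) * (|b1| - a1) := half_lt_self (mul_pos (by linarith) (by linarith))
  unfold FQ
  rw [sqrt_two_mul_add_two_mul_abs_sub, sqrt_two_mul_add_two_mul_abs_sub, abs_neg, max_self,
    abs_of_nonneg ha1, max_eq_right hb1.le]
  linarith [sqrt_sq_add_mul_sq_add_le (a1 + n * a2) α t (Nat.cast_nonneg n)]

/-- Step 1 in the proof of Theorem 2: every global minimizer of Problem (Q)
satisfies `|b1| ≤ a1`. -/
theorem Q_minimizer_abs_b1_le_a1 (n : ℕ) (hn : 1 < n)
    (a1 a2 b1 b2 α : ℝ)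
    (hfeas : FeasQ n a1 a2 b1 b2 α)
    (hmin : ∀ a1' a2' b1' b2' α' : ℝ,
      FeasQ n a1' a2' b1' b2' α' → FQ n a1 a2 b1 b2 α ≤ FQ n a1' a2' b1' b2' α') :
    |b1| ≤ a1 := by
  by_contra! h
  exact (FQ_move_b1_to_neg_a1_lt hn (by linarith [hfeas.1]) h a2 b2 _ α).not_ge
    (hmin _ _ _ _ _ (hfeas.move_b1_to_neg_a1 (by omega)))
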